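/- Assume the hypotheses of the oscillation decay theorem: there exist r_1 ∈ (0, r_0), η_1 > 0 and γ ∈ (0, 1 − 2^{−η_1}) such that any function v that is bounded by 1/2 in B(z, ρ), is a viscosity subsolution of M^+_L v ≥ 0 in B(z, ρ), satisfies v(x) ≤ (2 (min(|x−z|, r_0))/ρ)^{η_1} − 1/2 outside B(z, ρ), and satisfies |{x ∈ B(z,ρ): v(x) ≤ 0}| ≥ |B(z,ρ)|/2, must satisfy v ≤ 1/2 − γ in B(z, ρ/2), for every ρ < r_1. Then any bounded u with M^+_L u ≥ 0 and M^−_L u ≤ 0 in B(z_0, r) (viscosity sense) satisfies the Hölder estimate sup_{x,y ∈ B(z_0, r/2)} |u(x) − u(y)|/|x−y|^α ≤ C (1/(r ∧ r_0))^α ‖u‖_∞ with α = −log_2(1−γ) and C = (4 r_0/r_1)^α ·(appropriate normalization constant). -/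

import Mathlib

open MeasureTheory Real Set Metric
open scoped Classical

/-- The linear integro-differential operator `L_K` with kernel `K`,
with gradient compensation on `{|y - x| < r0}` only when `δ₂ ≥ 1`. -/
noncomputable def Lop (d : ℕ) (r0 d2 : ℝ)
    (K : EuclideanSpace ℝ (Fin d) → EuclideanSpace ℝ (Fin d) → ℝ)
    (u : EuclideanSpace ℝ (Fin d) → ℝ) (x : EuclideanSpace ℝ (Fin d)) : ℝ :=
  ∫ y, (u y - u x -
      (if dist y x < r0 ∧ 1 ≤ d2 then (inner ℝ (gradient u x) (y - x) : ℝ) else 0)) * K x y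

/-- The class of kernels comparable to `J` with constants `λ, Λ`. -/
def KernelClass (d : ℕ) (lam Lam : ℝ)
    (J : EuclideanSpace ℝ (Fin d) → EuclideanSpace ℝ (Fin d) → ℝ) :
    Set (EuclideanSpace ℝ (Fin d) → EuclideanSpace ℝ (Fin d) → ℝ) :=
  {K | ∀ x y, lam * J x y ≤ K x y ∧ K x y ≤ Lam * J x y}

/-- The maximal operator `M⁺ u(x) = sup_{L ∈ 𝓛} L u(x)`. -/
noncomputable def Mplus (d : ℕ) (r0 d2 lam Lam : ℝ)
    (J : EuclideanSpace ℝ (Fin d) → EuclideanSpace ℝ (Fin d) → ℝ)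
    (u : EuclideanSpace ℝ (Fin d) → ℝ) (x : EuclideanSpace ℝ (Fin d)) : ℝ :=
  sSup {v | ∃ K ∈ KernelClass d lam Lam J, v = Lop d r0 d2 K u x}

/-- The minimal operator `M⁻ u(x) = inf_{L ∈ 𝓛} L u(x)`. -/
noncomputable def Mminus (d : ℕ) (r0 d2 lam Lam : ℝ)
    (J : EuclideanSpace ℝ (Fin d) → EuclideanSpace ℝ (Fin d) → ℝ)
    (u : EuclideanSpace ℝ (Fin d) → ℝ) (x : EuclideanSpace ℝ (Fin d)) : ℝ :=
  sInf {v | ∃ K ∈ KernelClass d lam Lam J, v = Lop d r0 d2 K u x}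

/-- `φ` is a `C²` test function touching `u` from above at `x` on the neighborhood `N`. -/
def TouchAbove {d : ℕ} (u φ : EuclideanSpace ℝ (Fin d) → ℝ)
    (N : Set (EuclideanSpace ℝ (Fin d))) (x : EuclideanSpace ℝ (Fin d)) : Prop :=
  φ x = u x ∧ ∀ y ∈ N, y ≠ x → u y < φ y

def TouchBelow {d : ℕ} (u φ : EuclideanSpace ℝ (Fin d) → ℝ)
    (N : Set (EuclideanSpace ℝ (Fin d))) (x : EuclideanSpace ℝ (Fin d)) : Prop :=
  φ x = u x ∧ ∀ y ∈ N, y ≠ x → φ y < u y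

/-- `u` is a viscosity subsolution of `Mop u ≥ 0` in the open set `D`. -/
def ViscSubsol {d : ℕ}
    (Mop : (EuclideanSpace ℝ (Fin d) → ℝ) → EuclideanSpace ℝ (Fin d) → ℝ)
    (u : EuclideanSpace ℝ (Fin d) → ℝ) (D : Set (EuclideanSpace ℝ (Fin d))) : Prop :=
  ∀ x ∈ D, ∀ N ∈ nhds x, N ⊆ D → ∀ φ : EuclideanSpace ℝ (Fin d) → ℝ,
    ContDiffOn ℝ 2 φ N → TouchAbove u φ N x → 0 ≤ Mop (N.piecewise φ u) x

/-- `u` is a viscosity supersolution of `Mop u ≤ 0` in the open set `D`. -/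
def ViscSupersol {d : ℕ}
    (Mop : (EuclideanSpace ℝ (Fin d) → ℝ) → EuclideanSpace ℝ (Fin d) → ℝ)
    (u : EuclideanSpace ℝ (Fin d) → ℝ) (D : Set (EuclideanSpace ℝ (Fin d))) : Prop :=
  ∀ x ∈ D, ∀ N ∈ nhds x, N ⊆ D → ∀ φ : EuclideanSpace ℝ (Fin d) → ℝ,
    ContDiffOn ℝ 2 φ N → TouchBelow u φ N x → Mop (N.piecewise φ u) x ≤ 0

/-!
Subtracting the midrange of `u` on a ball and dividing by the oscillation turns `u` or `-u`
(whichever is below the midrange on half of the ball) into a function to which the oscillation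
decay hypothesis applies: subsolutions of `M⁺` are stable under positive affine maps, and `-u`
is a subsolution of `M⁺` because `M⁺(-u) = -M⁻ u`. Each application shrinks the oscillation on
the half ball by the factor `1 - γ`, and `(1 - γ) 2^η₁ ≥ 1` is exactly what keeps the tail bound
outside the ball valid after halving the radius, so the step iterates over the dyadic balls
`B(z, ρ₀ 2⁻ᵏ)`. Decay of the oscillation like `(1 - γ)ᵏ = 2^(-αk)` on dyadic scales is the Hölder
bound with exponent `α`.
-/

theorem gradient_const_mul_add {F : Type*} [NormedAddCommGroup F] [InnerProductSpace ℝ F]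
    [CompleteSpace F] (u : F → ℝ) (x : F) (c b : ℝ) :
    gradient (fun y => c * u y + b) x = c • gradient u x := by
  rw [gradient, fderiv_add_const, show (fun y => c * u y) = c • u from rfl,
    fderiv_const_smul_field, Pi.smul_apply, map_smul, gradient]

section Operators

variable {d : ℕ} {r0 d2 lam Lam : ℝ} {J : EuclideanSpace ℝ (Fin d) → EuclideanSpace ℝ (Fin d) → ℝ}

theorem Lop_const_mul_add (K : EuclideanSpace ℝ (Fin d) → EuclideanSpace ℝ (Fin d) → ℝ)
    (u : EuclideanSpace ℝ (Fin d) → ℝ) (x : EuclideanSpace ℝ (Fin d)) (c b : ℝ) :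
    Lop d r0 d2 K (fun y => c * u y + b) x = c * Lop d r0 d2 K u x := by
  rw [Lop, Lop, ← integral_const_mul, gradient_const_mul_add]
  congr 1 with y
  split_ifs
  · rw [real_inner_smul_left]; ring
  · ring

open scoped Pointwise in
theorem setOf_Lop_const_mul_add (u : EuclideanSpace ℝ (Fin d) → ℝ)
    (x : EuclideanSpace ℝ (Fin d)) (c b : ℝ) :
    {v | ∃ K ∈ KernelClass d lam Lam J, v = Lop d r0 d2 K (fun y => c * u y + b) x}
      = c • {v | ∃ K ∈ KernelClass d lam Lam J, v = Lop d r0 d2 K u x} := by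
  ext v
  simp only [Set.mem_smul_set, Set.mem_ofPred_eq, Lop_const_mul_add, smul_eq_mul]
  constructor
  · rintro ⟨K, hK, rfl⟩
    exact ⟨_, ⟨K, hK, rfl⟩, rfl⟩
  · rintro ⟨_, ⟨K, hK, rfl⟩, rfl⟩
    exact ⟨K, hK, rfl⟩

theorem Mplus_const_mul_add (u : EuclideanSpace ℝ (Fin d) → ℝ) (x : EuclideanSpace ℝ (Fin d))
    {c : ℝ} (hc : 0 ≤ c) (b : ℝ) :
    Mplus d r0 d2 lam Lam J (fun y => c * u y + b) x = c * Mplus d r0 d2 lam Lam J u x := by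
  rw [Mplus, Mplus, setOf_Lop_const_mul_add, Real.sSup_smul_of_nonneg hc, smul_eq_mul]

theorem Mplus_neg (u : EuclideanSpace ℝ (Fin d) → ℝ) (x : EuclideanSpace ℝ (Fin d)) :
    Mplus d r0 d2 lam Lam J (-u) x = -Mminus d r0 d2 lam Lam J u x := by
  have hneg : -u = fun y => -1 * u y + 0 := by ext; simp
  rw [Mplus, Mminus, hneg, setOf_Lop_const_mul_add,
    Real.sSup_smul_of_nonpos (by norm_num), smul_eq_mul, neg_one_mul]

theorem ViscSubsol.mono {Mop : (EuclideanSpace ℝ (Fin d) → ℝ) → EuclideanSpace ℝ (Fin d) → ℝ}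
    {u : EuclideanSpace ℝ (Fin d) → ℝ} {D D' : Set (EuclideanSpace ℝ (Fin d))}
    (h : ViscSubsol Mop u D) (hD : D' ⊆ D) : ViscSubsol Mop u D' :=
  fun x hx N hN hND' => h x (hD hx) N hN (hND'.trans hD)

theorem ViscSubsol.const_mul_add {u : EuclideanSpace ℝ (Fin d) → ℝ}
    {D : Set (EuclideanSpace ℝ (Fin d))} (h : ViscSubsol (Mplus d r0 d2 lam Lam J) u D)
    {c : ℝ} (hc : 0 < c) (b : ℝ) :
    ViscSubsol (Mplus d r0 d2 lam Lam J) (fun y => c * u y + b) D := by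
  intro x hx N hN hND φ hφ ⟨hφx, hφlt⟩
  have htouch : TouchAbove u (fun y => (φ y - b) / c) N x := by
    refine ⟨by simp [hφx, hc.ne'], fun y hy hyx => ?_⟩
    rw [lt_div_iff₀ hc]
    linarith [hφlt y hy hyx]
  have hpw : N.piecewise φ (fun y => c * u y + b)
      = fun y => c * N.piecewise (fun y => (φ y - b) / c) u y + b := by
    ext y
    by_cases hy : y ∈ N
    · simp [hy, mul_div_cancel₀ _ hc.ne']
    · simp [hy]
  rw [hpw, Mplus_const_mul_add _ _ hc.le]
  exact mul_nonneg hc.le (h x hx N hN hND _ ((hφ.sub contDiffOn_const).div_const c) htouch)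

theorem ViscSupersol.neg {u : EuclideanSpace ℝ (Fin d) → ℝ} {D : Set (EuclideanSpace ℝ (Fin d))}
    (h : ViscSupersol (Mminus d r0 d2 lam Lam J) u D) :
    ViscSubsol (Mplus d r0 d2 lam Lam J) (-u) D := by
  intro x hx N hN hND φ hφ ⟨hφx, hφlt⟩
  have htouch : TouchBelow u (-φ) N x :=
    ⟨by simp [hφx], fun y hy hyx => by simpa using neg_lt.mp (hφlt y hy hyx)⟩
  have hpw : N.piecewise φ (-u) = -N.piecewise (-φ) u := by
    ext y
    by_cases hy : y ∈ N <;> simp [hy]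
  rw [hpw, Mplus_neg]
  exact neg_nonneg.mpr (h x hx N hN hND _ hφ.neg htouch)

end Operators

section Oscillation

variable {X : Type*} [MetricSpace X]

noncomputable def oscTail (r0 η ρ : ℝ) (z x : X) : ℝ := (2 * min (dist x z) r0 / ρ) ^ η

-- `(u - m) / w` and `(m - u) / w` both satisfy the bounds on `v` in the oscillation decay lemma.
def OscControl (u : X → ℝ) (r0 η : ℝ) (z : X) (ρ m w : ℝ) : Prop :=
  (∀ x ∈ ball z ρ, |u x - m| ≤ w / 2) ∧
    ∀ x ∉ ball z ρ, |u x - m| ≤ w * (oscTail r0 η ρ z x - 1 / 2)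

def HasOscDecay [MeasurableSpace X] (μ : Measure X) (Sub : (X → ℝ) → Set X → Prop)
    (r0 r1 η γ : ℝ) : Prop :=
  ∀ (z : X) (ρ : ℝ), 0 < ρ → ρ < r1 → ∀ v : X → ℝ, (∃ M, ∀ x, |v x| ≤ M) →
    Sub v (ball z ρ) → (∀ x ∈ ball z ρ, v x ≤ 1 / 2) →
    (∀ x ∉ ball z ρ, v x ≤ oscTail r0 η ρ z x - 1 / 2) →
    μ (ball z ρ) / 2 ≤ μ {x ∈ ball z ρ | v x ≤ 0} →
    ∀ x ∈ ball z (ρ / 2), v x ≤ 1 / 2 - γ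

theorem measure_half_le_sublevel_or_superlevel {α : Type*} [MeasurableSpace α] (μ : Measure α)
    (s : Set α) (u : α → ℝ) (m : ℝ) :
    μ s / 2 ≤ μ {x ∈ s | u x ≤ m} ∨ μ s / 2 ≤ μ {x ∈ s | m ≤ u x} := by
  by_contra! h
  have hcover : μ s ≤ μ {x ∈ s | u x ≤ m} + μ {x ∈ s | m ≤ u x} :=
    (measure_mono fun x hx => (le_total (u x) m).imp (⟨hx, ·⟩) (⟨hx, ·⟩)).trans
      (measure_union_le _ _)
  have := ENNReal.add_lt_add h.1 h.2
  rw [ENNReal.add_halves] at this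
  exact this.not_ge hcover

variable {u : X → ℝ} {r0 η ρ m w : ℝ} {z : X}

theorem one_le_oscTail (hη : 0 ≤ η) (hρ : 0 < ρ) {x : X} (hx : ρ ≤ 2 * dist x z)
    (hρr0 : ρ ≤ 2 * r0) : 1 ≤ oscTail r0 η ρ z x := by
  refine Real.one_le_rpow ((one_le_div hρ).2 ?_) hη
  rcases min_cases (dist x z) r0 with ⟨h, _⟩ | ⟨h, _⟩ <;> rw [h] <;> assumption

theorem oscTail_half (hρ : 0 ≤ ρ) (hr0 : 0 ≤ r0) (x : X) :
    oscTail r0 η (ρ / 2) z x = 2 ^ η * oscTail r0 η ρ z x := by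
  rw [oscTail, oscTail, ← Real.mul_rpow two_pos.le
    (div_nonneg (mul_nonneg two_pos.le (le_min dist_nonneg hr0)) hρ)]
  congr 1
  ring

theorem OscControl.neg (h : OscControl u r0 η z ρ m w) : OscControl (-u) r0 η z ρ (-m) w := by
  have habs : ∀ x, |(-u) x - -m| = |u x - m| := fun x => by
    rw [Pi.neg_apply, neg_sub_neg, abs_sub_comm]
  exact ⟨fun x hx => habs x ▸ h.1 x hx, fun x hx => habs x ▸ h.2 x hx⟩

theorem OscControl.abs_sub_le_of_mem_ball (h : OscControl u r0 η z ρ m w) {x y : X}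
    (hx : x ∈ ball z ρ) (hy : y ∈ ball z ρ) : |u x - u y| ≤ w := by
  have := _root_.abs_sub_le (u x) m (u y)
  rw [abs_sub_comm m] at this
  linarith [h.1 x hx, h.1 y hy]

theorem oscControl_zero_of_abs_le {S : ℝ} (hS : ∀ x, |u x| ≤ S) (hη : 0 ≤ η) (hρ : 0 < ρ)
    (hρr0 : ρ ≤ 2 * r0) (z : X) : OscControl u r0 η z ρ 0 (2 * S) := by
  refine ⟨fun x _ => by simpa using hS x, fun x hx => ?_⟩
  have hT := one_le_oscTail hη hρ
    (by linarith [not_lt.1 (mem_ball.not.1 hx), dist_nonneg (x := x) (y := z)]) hρr0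
  have hS0 := (abs_nonneg (u x)).trans (hS x)
  rw [sub_zero]
  nlinarith [hS x]

theorem OscControl.abs_sub_le_of_notMem_ball_half (h : OscControl u r0 η z ρ m w) (hη : 0 ≤ η)
    (hρ : 0 < ρ) (hρr0 : ρ ≤ 2 * r0) (hw : 0 ≤ w) {x : X} (hx : x ∉ ball z (ρ / 2)) :
    |u x - m| ≤ w * (oscTail r0 η ρ z x - 1 / 2) := by
  by_cases hxρ : x ∈ ball z ρ
  · have hT := one_le_oscTail hη hρ (by linarith [not_lt.1 (mem_ball.not.1 hx)]) hρr0
    nlinarith [h.1 x hxρ]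
  · exact h.2 x hxρ

/-- Halving the radius multiplies the tail by `2 ^ η`, which pays for shrinking the width by
`1 - γ` as well as for moving the centre by `γ w / 2`. -/
theorem OscControl.recenter_tail {γ m' : ℝ} (h : OscControl u r0 η z ρ m w) (hη : 0 ≤ η)
    (hρ : 0 < ρ) (hρr0 : ρ ≤ 2 * r0) (hw : 0 ≤ w) (hθ : 1 ≤ (1 - γ) * 2 ^ η)
    (hm' : |m' - m| ≤ γ * w / 2) {x : X} (hx : x ∉ ball z (ρ / 2)) :
    |u x - m'| ≤ (1 - γ) * w * (oscTail r0 η (ρ / 2) z x - 1 / 2) := by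
  have hT : 1 ≤ oscTail r0 η ρ z x :=
    one_le_oscTail hη hρ (by linarith [not_lt.1 (mem_ball.not.1 hx)]) hρr0
  have hold := h.abs_sub_le_of_notMem_ball_half hη hρ hρr0 hw hx
  have htri := _root_.abs_sub_le (u x) m m'
  rw [abs_sub_comm m] at htri
  rw [oscTail_half hρ.le (by linarith)]
  nlinarith [mul_nonneg (mul_nonneg hw (zero_le_one.trans hT)) (sub_nonneg.2 hθ)]

end Oscillation

section Iteration

variable {X : Type*} [MetricSpace X] [MeasurableSpace X] {μ : Measure X}
  {Sub : (X → ℝ) → Set X → Prop} {r0 r1 η γ : ℝ} {u : X → ℝ} {z : X} {ρ m w : ℝ}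

theorem OscControl.decay_of_half_le_sublevel (hdec : HasOscDecay μ Sub r0 r1 η γ)
    (hSub : ∀ v D c b, 0 < c → Sub v D → Sub (fun x => c * v x + b) D)
    (h : OscControl u r0 η z ρ m w) (hu : Sub u (ball z ρ)) (hbdd : ∃ M, ∀ x, |u x| ≤ M)
    (hρ : 0 < ρ) (hρr1 : ρ < r1) (hρr0 : ρ ≤ 2 * r0) (hη : 0 ≤ η) (hγ : 0 ≤ γ)
    (hθ : 1 ≤ (1 - γ) * 2 ^ η) (hw : 0 < w)
    (hhalf : μ (ball z ρ) / 2 ≤ μ {x ∈ ball z ρ | u x ≤ m}) :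
    OscControl u r0 η z (ρ / 2) (m - γ * w / 2) ((1 - γ) * w) := by
  obtain ⟨M, hM⟩ := hbdd
  have hv : ∀ x, w⁻¹ * u x + -(w⁻¹ * m) = (u x - m) / w := fun x => by ring
  have hdecay := hdec z ρ hρ hρr1 _ ⟨(M + |m|) / w, fun x => ?bdd⟩
    (hSub _ _ _ (-(w⁻¹ * m)) (inv_pos.2 hw) hu) (fun x hx => ?inside) (fun x hx => ?outside)
    (hhalf.trans (measure_mono fun x ⟨hx, hux⟩ => ⟨hx, ?sublevel⟩))
  case bdd =>
    rw [hv, abs_div, abs_of_pos hw]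
    gcongr
    exact (_root_.abs_sub _ _).trans (by linarith [hM x])
  case inside =>
    rw [hv, div_le_iff₀ hw]
    linarith [(abs_le.1 (h.1 x hx)).2]
  case outside =>
    rw [hv, div_le_iff₀ hw, mul_comm]
    exact (le_abs_self _).trans (h.2 x hx)
  case sublevel =>
    rw [hv]
    exact div_nonpos_of_nonpos_of_nonneg (by linarith) hw.le
  refine ⟨fun x hx => ?_, fun x hx => h.recenter_tail hη hρ hρr0 hw.le hθ ?_ hx⟩
  · have hlower := (abs_le.1 (h.1 x (ball_subset_ball (half_le_self hρ.le) hx))).1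
    have hupper := hdecay x hx
    rw [hv, div_le_iff₀ hw] at hupper
    rw [abs_le]
    constructor <;> linarith
  · rw [sub_sub_cancel_left, abs_neg, abs_of_nonneg (by positivity)]

theorem OscControl.exists_decay (hdec : HasOscDecay μ Sub r0 r1 η γ)
    (hSub : ∀ v D c b, 0 < c → Sub v D → Sub (fun x => c * v x + b) D)
    (h : OscControl u r0 η z ρ m w) (hu : Sub u (ball z ρ)) (hu' : Sub (-u) (ball z ρ))
    (hbdd : ∃ M, ∀ x, |u x| ≤ M) (hρ : 0 < ρ) (hρr1 : ρ < r1) (hρr0 : ρ ≤ 2 * r0)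
    (hη : 0 ≤ η) (hγ : 0 ≤ γ) (hθ : 1 ≤ (1 - γ) * 2 ^ η) (hw : 0 < w) :
    ∃ m', OscControl u r0 η z (ρ / 2) m' ((1 - γ) * w) := by
  rcases measure_half_le_sublevel_or_superlevel μ (ball z ρ) u m with hle | hge
  · exact ⟨_, h.decay_of_half_le_sublevel hdec hSub hu hbdd hρ hρr1 hρr0 hη hγ hθ hw hle⟩
  · obtain ⟨M, hM⟩ := hbdd
    have hneg := h.neg.decay_of_half_le_sublevel hdec hSub hu' ⟨M, by simpa using hM⟩ hρ hρr1
      hρr0 hη hγ hθ hw (by simpa using hge)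
    exact ⟨_, by simpa using hneg.neg⟩

theorem exists_oscControl_dyadic (hdec : HasOscDecay μ Sub r0 r1 η γ)
    (hSub : ∀ v D c b, 0 < c → Sub v D → Sub (fun x => c * v x + b) D) {S ρ₀ : ℝ}
    (hS : ∀ x, |u x| ≤ S) (hS0 : 0 < S) (hu : ∀ ρ ≤ ρ₀, Sub u (ball z ρ))
    (hu' : ∀ ρ ≤ ρ₀, Sub (-u) (ball z ρ)) (hρ₀ : 0 < ρ₀) (hρ₀r1 : ρ₀ < r1) (hρ₀r0 : ρ₀ ≤ r0)
    (hη : 0 ≤ η) (hγ : 0 ≤ γ) (hγ1 : γ < 1) (hθ : 1 ≤ (1 - γ) * 2 ^ η) (k : ℕ) :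
    ∃ m, OscControl u r0 η z (ρ₀ / 2 ^ k) m (2 * S * (1 - γ) ^ k) := by
  induction k with
  | zero => exact ⟨0, by simpa using oscControl_zero_of_abs_le hS hη hρ₀ (by linarith) z⟩
  | succ k ih =>
    obtain ⟨m, hm⟩ := ih
    have hρk : ρ₀ / 2 ^ k ≤ ρ₀ := div_le_self hρ₀.le (one_le_pow₀ one_le_two)
    have hρk0 : 0 < ρ₀ / 2 ^ k := by positivity
    obtain ⟨m', hm'⟩ := hm.exists_decay hdec hSub (hu _ hρk) (hu' _ hρk) ⟨S, hS⟩ hρk0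
      (hρk.trans_lt hρ₀r1) (by linarith) hη hγ hθ (by have := sub_pos.2 hγ1; positivity)
    refine ⟨m', ?_⟩
    convert hm' using 1 <;> ring

theorem abs_sub_le_of_dist_lt_div_two_pow (hdec : HasOscDecay μ Sub r0 r1 η γ)
    (hSub : ∀ v D c b, 0 < c → Sub v D → Sub (fun x => c * v x + b) D) {S ρ₀ : ℝ}
    (hS : ∀ x, |u x| ≤ S) (hu : ∀ ρ ≤ ρ₀, Sub u (ball z ρ))
    (hu' : ∀ ρ ≤ ρ₀, Sub (-u) (ball z ρ)) (hρ₀ : 0 < ρ₀) (hρ₀r1 : ρ₀ < r1) (hρ₀r0 : ρ₀ ≤ r0)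
    (hη : 0 ≤ η) (hγ : 0 ≤ γ) (hγ1 : γ < 1) (hθ : 1 ≤ (1 - γ) * 2 ^ η) {k : ℕ} {x : X}
    (hx : dist x z < ρ₀ / 2 ^ k) : |u x - u z| ≤ 2 * S * (1 - γ) ^ k := by
  rcases ((abs_nonneg _).trans (hS x)).eq_or_lt with hS0 | hS0
  · subst hS0
    simp [abs_nonpos_iff.1 (hS x), abs_nonpos_iff.1 (hS z)]
  obtain ⟨m, hm⟩ := exists_oscControl_dyadic hdec hSub hS hS0 hu hu' hρ₀ hρ₀r1 hρ₀r0 hη hγ hγ1 hθ k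
  exact hm.abs_sub_le_of_mem_ball hx (mem_ball_self (by positivity))

end Iteration

theorem one_le_mul_rpow_of_rpow_neg_le {b η θ : ℝ} (hb : 0 < b) (h : b ^ (-η) ≤ θ) :
    1 ≤ θ * b ^ η := by
  have := mul_le_mul_of_nonneg_right h (Real.rpow_nonneg hb.le η)
  rwa [← Real.rpow_add hb, neg_add_cancel, Real.rpow_zero] at this

theorem abs_sub_le_mul_rpow_of_dyadic {X : Type*} [MetricSpace X] {u : X → ℝ} {s : Set X}
    {A ρ₀ α : ℝ} (hρ₀ : 0 < ρ₀) (hα : 0 ≤ α) (hA : ∀ x ∈ s, ∀ y ∈ s, |u x - u y| ≤ A)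
    (hdyadic : ∀ k : ℕ, ∀ x ∈ s, ∀ y ∈ s, dist x y < ρ₀ / 2 ^ k →
      |u x - u y| ≤ A * ((2 : ℝ) ^ (-α)) ^ k)
    {x y : X} (hx : x ∈ s) (hy : y ∈ s) :
    |u x - u y| ≤ A * (4 * dist x y / ρ₀) ^ α := by
  have hA0 : 0 ≤ A := (abs_nonneg _).trans (hA x hx x hx)
  rcases eq_or_ne x y with rfl | hxy
  · rw [sub_self, abs_zero]
    positivity
  have hD : 0 < dist x y := dist_pos.2 hxy
  rcases le_or_gt (ρ₀ / 2) (dist x y) with hfar | hnear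
  · have : 1 ≤ (4 * dist x y / ρ₀) ^ α :=
      Real.one_le_rpow ((one_le_div hρ₀).2 (by linarith)) hα
    exact (hA x hx y hy).trans (le_mul_of_one_le_right hA0 this)
  obtain ⟨k, hk, hk'⟩ := exists_nat_pow_near
    ((one_le_div (a := ρ₀) (by positivity : 0 < 2 * dist x y)).2 (by linarith)) one_lt_two
  have hk2 : (0 : ℝ) < 2 ^ k := by positivity
  rw [le_div_iff₀ (by positivity)] at hk
  rw [div_lt_iff₀ (by positivity), pow_succ] at hk'
  have hlt : dist x y < ρ₀ / 2 ^ k := by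
    rw [lt_div_iff₀ hk2]
    nlinarith
  have hpow : ((2 : ℝ) ^ (-α)) ^ k ≤ (4 * dist x y / ρ₀) ^ α := by
    rw [← Real.rpow_natCast, ← Real.rpow_mul two_pos.le, mul_comm, Real.rpow_mul two_pos.le,
      Real.rpow_neg (by positivity), ← Real.inv_rpow (by positivity), Real.rpow_natCast]
    refine Real.rpow_le_rpow (by positivity) ?_ hα
    rw [inv_le_iff_one_le_mul₀ hk2, div_mul_eq_mul_div, le_div_iff₀ hρ₀]
    nlinarith
  exact (hdyadic k x hx y hy hlt).trans (mul_le_mul_of_nonneg_left hpow hA0)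

theorem stmt17_general (d : ℕ) (r0 d2 lam Lam : ℝ)
    (J : EuclideanSpace ℝ (Fin d) → EuclideanSpace ℝ (Fin d) → ℝ)
    -- the oscillation decay hypothesis with constants r1, η1, γ
    (r1 η1 γ : ℝ) (hr1 : r1 ∈ Set.Ioo 0 r0) (hη1 : 0 < η1)
    (hγ : γ ∈ Set.Ioo 0 (1 - 2 ^ (-η1)))
    (Hdecay : ∀ (z : EuclideanSpace ℝ (Fin d)) (ρ : ℝ), 0 < ρ → ρ < r1 →
      ∀ v : EuclideanSpace ℝ (Fin d) → ℝ, (∃ M, ∀ x, |v x| ≤ M) →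
        ViscSubsol (Mplus d r0 d2 lam Lam J) v (Metric.ball z ρ) →
        (∀ x ∈ Metric.ball z ρ, v x ≤ 1 / 2) →
        (∀ x ∉ Metric.ball z ρ, v x ≤ (2 * min (dist x z) r0 / ρ) ^ η1 - 1 / 2) →
        volume (Metric.ball z ρ) / 2 ≤ volume {x ∈ Metric.ball z ρ | v x ≤ 0} →
        ∀ x ∈ Metric.ball z (ρ / 2), v x ≤ 1 / 2 - γ) :
    -- the Hölder estimate
    ∀ (z0 : EuclideanSpace ℝ (Fin d)) (r : ℝ), 0 < r →
      ∀ u : EuclideanSpace ℝ (Fin d) → ℝ, (∃ M, ∀ x, |u x| ≤ M) →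
        ViscSubsol (Mplus d r0 d2 lam Lam J) u (Metric.ball z0 r) →
        ViscSupersol (Mminus d r0 d2 lam Lam J) u (Metric.ball z0 r) →
        ∃ C : ℝ, 0 < C ∧ ∀ x ∈ Metric.ball z0 (r / 2), ∀ y ∈ Metric.ball z0 (r / 2),
          |u x - u y| ≤ C * (1 / min r r0) ^ (-Real.logb 2 (1 - γ)) *
            (⨆ w, |u w|) * dist x y ^ (-Real.logb 2 (1 - γ)) := by
  intro z0 r hr u ⟨M, hM⟩ hsub hsup
  obtain ⟨hγ0, hγη⟩ := hγ
  obtain ⟨hr1, hr1r0⟩ := hr1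
  set α := -Real.logb 2 (1 - γ)
  have hθ : 0 < 1 - γ := by linarith [Real.rpow_pos_of_pos two_pos (-η1)]
  have hθα : (2 : ℝ) ^ (-α) = 1 - γ := by rw [neg_neg, Real.rpow_logb two_pos (by norm_num) hθ]
  have hα : 0 ≤ α := neg_nonneg.2 (Real.logb_nonpos one_lt_two hθ.le (by linarith))
  set S := ⨆ w, |u w|
  have hS : ∀ x, |u x| ≤ S := le_ciSup ⟨M, Set.forall_mem_range.2 hM⟩
  obtain ⟨ρ₀, hρ₀, hρ₀r, hρ₀r1⟩ : ∃ ρ₀ : ℝ, 0 < ρ₀ ∧ ρ₀ ≤ r / 2 ∧ ρ₀ < r1 :=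
    ⟨min r r1 / 2, by positivity, by linarith [min_le_left r r1], by linarith [min_le_right r r1]⟩
  have hdyadic : ∀ k : ℕ, ∀ x ∈ ball z0 (r / 2), ∀ y ∈ ball z0 (r / 2),
      dist x y < ρ₀ / 2 ^ k → |u x - u y| ≤ 2 * S * ((2 : ℝ) ^ (-α)) ^ k := by
    intro k x _ y hy hxy
    have hball : ∀ ρ ≤ ρ₀, ball y ρ ⊆ ball z0 r := fun ρ hρ =>
      ball_subset_ball' (by linarith [mem_ball.1 hy])
    rw [hθα]
    exact abs_sub_le_of_dist_lt_div_two_pow (μ := volume) Hdecay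
      (fun _ _ _ b hc hv => hv.const_mul_add hc b) hS (fun ρ hρ => hsub.mono (hball ρ hρ))
      (fun ρ hρ => hsup.neg.mono (hball ρ hρ)) hρ₀ hρ₀r1 (by linarith) hη1.le hγ0.le
      (by linarith) (one_le_mul_rpow_of_rpow_neg_le two_pos (by linarith)) hxy
  have hmin : 0 < min r r0 := lt_min hr (hr1.trans hr1r0)
  refine ⟨2 * (4 * min r r0 / ρ₀) ^ α, by positivity, fun x hx y hy => ?_⟩
  calc |u x - u y| ≤ 2 * S * (4 * dist x y / ρ₀) ^ α :=
        abs_sub_le_mul_rpow_of_dyadic hρ₀ hα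
          (fun x _ y _ => (abs_sub _ _).trans (by linarith [hS x, hS y])) hdyadic hx hy
    _ = 2 * S * ((4 * min r r0 / ρ₀) * (1 / min r r0) * dist x y) ^ α := by
        congr 2; field_simp
    _ = _ := by
        rw [Real.mul_rpow (by positivity) dist_nonneg,
          Real.mul_rpow (by positivity) (by positivity)]
        ring

theorem stmt17 (d : ℕ) (hd : 1 ≤ d) (r0 a1 a2 d1 d2 lam Lam M0 : ℝ) (f : ℝ → ℝ)
    (J : EuclideanSpace ℝ (Fin d) → EuclideanSpace ℝ (Fin d) → ℝ)
    (hr0 : 0 < r0) (ha1 : 0 < a1) (ha2 : 0 < a2)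
    (hd1 : d1 ∈ Set.Ioo (0:ℝ) 2) (hd2 : d2 ∈ Set.Ioo (0:ℝ) 2)
    (hlam : 0 < lam) (hLam : lam ≤ Lam)
    (hf0 : ∀ s, 0 ≤ s → 0 ≤ f s)
    (hmono : ∀ s t, 0 ≤ s → s ≤ t → f s ≤ f t)
    (hscale : ∀ s t, 1 ≤ s → 1/r0 ≤ t →
      a1 * s ^ d1 * f t ≤ f (s * t) ∧ f (s * t) ≤ a2 * s ^ d2 * f t)
    (hJpos : ∀ x y, x ≠ y → 0 ≤ J x y)
    (hJ : ∀ x y, 0 < dist x y → dist x y < r0 →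
      J x y = f (dist x y)⁻¹ / (dist x y) ^ (d : ℝ))
    (hM0 : ∀ x, (∫ y in {y | r0 ≤ dist y x}, J x y) ≤ M0)
    -- the oscillation decay hypothesis with constants r1, η1, γ
    (r1 η1 γ : ℝ) (hr1 : r1 ∈ Set.Ioo 0 r0) (hη1 : 0 < η1)
    (hγ : γ ∈ Set.Ioo 0 (1 - 2 ^ (-η1)))
    (Hdecay : ∀ (z : EuclideanSpace ℝ (Fin d)) (ρ : ℝ), 0 < ρ → ρ < r1 →
      ∀ v : EuclideanSpace ℝ (Fin d) → ℝ, (∃ M, ∀ x, |v x| ≤ M) →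
        ViscSubsol (Mplus d r0 d2 lam Lam J) v (Metric.ball z ρ) →
        (∀ x ∈ Metric.ball z ρ, v x ≤ 1 / 2) →
        (∀ x ∉ Metric.ball z ρ, v x ≤ (2 * min (dist x z) r0 / ρ) ^ η1 - 1 / 2) →
        volume (Metric.ball z ρ) / 2 ≤ volume {x ∈ Metric.ball z ρ | v x ≤ 0} →
        ∀ x ∈ Metric.ball z (ρ / 2), v x ≤ 1 / 2 - γ) :
    -- the Hölder estimate
    ∀ (z0 : EuclideanSpace ℝ (Fin d)) (r : ℝ), 0 < r →
      ∀ u : EuclideanSpace ℝ (Fin d) → ℝ, (∃ M, ∀ x, |u x| ≤ M) →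
        ViscSubsol (Mplus d r0 d2 lam Lam J) u (Metric.ball z0 r) →
        ViscSupersol (Mminus d r0 d2 lam Lam J) u (Metric.ball z0 r) →
        ∃ C : ℝ, 0 < C ∧ ∀ x ∈ Metric.ball z0 (r / 2), ∀ y ∈ Metric.ball z0 (r / 2),
          |u x - u y| ≤ C * (1 / min r r0) ^ (-Real.logb 2 (1 - γ)) *
            (⨆ w, |u w|) * dist x y ^ (-Real.logb 2 (1 - γ)) :=
  stmt17_general d r0 d2 lam Lam J r1 η1 γ hr1 hη1 hγ Hdecay
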